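/- arXiv:1906.05258 — 6 statements merged into one kernel-verified Lean document; each statement's English description precedes it below -/
import Mathlib

section
/- Let j assign to each unordered pair {a,b} of distinct elements of {1,…,5} a real number j_{ab} > 0, and let n assign to each ordered pair (a,b) of distinct elements a unit vector n_{ab} ∈ ℝ³ with n_{ba} = −n_{ab}. On the complex vector space of maps v : {1,…,5} → ℂ³ with v(5) = 0, define the symmetric complex-bilinear form H(v,v') = Σ_{a≠b} (j_{ab}/2) n_{ab}·(v(a) × v'(b)) + i Σ_{a<b} (j_{ab}/2)[(v(a)−v(b))·(v'(a)−v'(b)) − ((v(a)−v(b))·n_{ab})((v'(a)−v'(b))·n_{ab})], where · is the complex-bilinear dot product and × the cross product on ℂ³ (real vectors n_{ab} regarded as complex). If for every pair of distinct a, b ∈ {1,…,4} the three vectors n_{a5}, n_{ab}, n_{b5} are linearly independent over ℝ, then H is nondegenerate: H(v',v) = 0 for all v' implies v = 0. -/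
open Matrix

private lemma termA (x : Fin 3 → ℂ) (nn : Fin 3 → ℝ) (hn : nn ⬝ᵥ nn = 1) :
    ((fun i => (starRingEnd ℂ) (x i)) ⬝ᵥ x) -
      ((fun i => (starRingEnd ℂ) (x i)) ⬝ᵥ (fun i => (nn i : ℂ))) *
        (x ⬝ᵥ (fun i => (nn i : ℂ))) =
    ((∑ i, Complex.normSq (x i - (x ⬝ᵥ (fun i => (nn i : ℂ))) * nn i) : ℝ) : ℂ) := by
  have h3 : nn 0 * nn 0 + nn 1 * nn 1 + nn 2 * nn 2 = 1 := by
    simpa [dotProduct, Fin.sum_univ_three] using hn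
  have hnC : (nn 0 : ℂ) * nn 0 + (nn 1 : ℂ) * nn 1 + (nn 2 : ℂ) * nn 2 = 1 := by
    exact_mod_cast congrArg (Complex.ofReal) h3
  push_cast [Fin.sum_univ_three, Complex.normSq_eq_conj_mul_self]
  simp only [dotProduct, Fin.sum_univ_three, map_sub, _root_.map_mul, _root_.map_add,
    Complex.conj_ofReal]
  linear_combination (-(((starRingEnd ℂ) (x 0)) * nn 0 + ((starRingEnd ℂ) (x 1)) * nn 1 +
    ((starRingEnd ℂ) (x 2)) * nn 2) * (x 0 * nn 0 + x 1 * nn 1 + x 2 * nn 2)) * hnC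

/-- Nondegeneracy of (one chiral block of) the hessian of the euclidean EPRL
vertex action with `γ < 1`, given linear independence of the triples of
normals `n_{a5}, n_{ab}, n_{b5}`. Indices `0,…,4` of `Fin 5` play the role of
`1,…,5`; in particular the index `4` plays the role of `5`. -/
theorem euclidean_EPRL_hessian_nondegenerate
    (j : Fin 5 → Fin 5 → ℝ) (n : Fin 5 → Fin 5 → Fin 3 → ℝ)
    (hjsymm : ∀ a b, j a b = j b a)
    (hjpos : ∀ a b, a ≠ b → 0 < j a b)
    (hnanti : ∀ a b, n b a = -(n a b))
    (hnunit : ∀ a b, a ≠ b → (n a b) ⬝ᵥ (n a b) = 1)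
    (H : (Fin 5 → Fin 3 → ℂ) → (Fin 5 → Fin 3 → ℂ) → ℂ)
    (hH : ∀ v v', H v v' =
      (∑ a : Fin 5, ∑ b : Fin 5, if a = b then 0 else
        ((j a b : ℂ) / 2) *
          ((fun i => (n a b i : ℂ)) ⬝ᵥ (crossProduct (v a) (v' b)))) +
      Complex.I * (∑ a : Fin 5, ∑ b : Fin 5, if a < b then
        ((j a b : ℂ) / 2) *
          (((v a - v b) ⬝ᵥ (v' a - v' b)) -
            ((v a - v b) ⬝ᵥ (fun i => (n a b i : ℂ))) *
              ((v' a - v' b) ⬝ᵥ (fun i => (n a b i : ℂ)))) else 0))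
    (hindep : ∀ a b : Fin 5, a ≠ b → a ≠ 4 → b ≠ 4 →
      LinearIndependent ℝ ![n a 4, n a b, n b 4]) :
    ∀ v : Fin 5 → Fin 3 → ℂ, v 4 = 0 →
      (∀ v' : Fin 5 → Fin 3 → ℂ, v' 4 = 0 → H v' v = 0) → v = 0 := by
  intro v hv4 hker
  classical
  have hvc4 : (fun i => (starRingEnd ℂ) (v 4 i)) = (0 : Fin 3 → ℂ) := by
    funext i; rw [congrFun hv4 i]; simp
  have h0 := hker (fun a i => (starRingEnd ℂ) (v a i)) hvc4
  rw [hH] at h0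
  -- name the real coefficients
  set R : Fin 5 → Fin 5 → ℝ := fun a b =>
    if a < b then (j a b / 2) *
      (∑ i, Complex.normSq ((v a - v b) i -
        ((v a - v b) ⬝ᵥ (fun i => (n a b i : ℂ))) * n a b i))
    else 0 with hRdef
  -- name the two sums
  set S : ℂ := ∑ a : Fin 5, ∑ b : Fin 5,
      if a = b then 0
      else (j a b : ℂ) / 2 *
        (fun i => (n a b i : ℂ)) ⬝ᵥ (crossProduct fun i => (starRingEnd ℂ) (v a i)) (v b)
    with hSdef
  set T : ℂ := ∑ a : Fin 5, ∑ b : Fin 5,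
      if a < b then
        (j a b : ℂ) / 2 *
          (((fun i => (starRingEnd ℂ) (v a i)) - fun i => (starRingEnd ℂ) (v b i)) ⬝ᵥ (v a - v b) -
            (((fun i => (starRingEnd ℂ) (v a i)) - fun i => (starRingEnd ℂ) (v b i)) ⬝ᵥ
                fun i => (n a b i : ℂ)) *
              (v a - v b) ⬝ᵥ fun i => (n a b i : ℂ))
      else 0
    with hTdef
  -- h0 : S + I * T = 0
  -- Step 1 : S is real
  have hterm : ∀ a b : Fin 5,
      (starRingEnd ℂ) (if a = b then (0:ℂ)
        else (j a b : ℂ) / 2 *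
          (fun i => (n a b i : ℂ)) ⬝ᵥ (crossProduct fun i => (starRingEnd ℂ) (v a i)) (v b))
      = (if b = a then (0:ℂ)
        else (j b a : ℂ) / 2 *
          (fun i => (n b a i : ℂ)) ⬝ᵥ (crossProduct fun i => (starRingEnd ℂ) (v b i)) (v a)) := by
    intro a b
    rcases eq_or_ne a b with h | h
    · simp [h]
    · rw [if_neg h, if_neg (Ne.symm h), hjsymm b a, hnanti a b]
      simp only [crossProduct, dotProduct, Fin.sum_univ_three, LinearMap.mk₂_apply,
        Matrix.cons_val_zero, Matrix.cons_val_one, Matrix.head_cons, Matrix.cons_val_two,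
        Matrix.tail_cons, Pi.neg_apply, Complex.ofReal_neg]
      simp only [map_sub, _root_.map_mul, _root_.map_add, map_div₀, map_neg,
        Complex.conj_ofReal, Complex.conj_conj, map_ofNat]
      ring
  have hSreal : (starRingEnd ℂ) S = S := by
    rw [hSdef]
    rw [map_sum]
    calc (∑ a : Fin 5, (starRingEnd ℂ) (∑ b : Fin 5, _))
        = ∑ a : Fin 5, ∑ b : Fin 5,
            (if b = a then (0:ℂ)
              else (j b a : ℂ) / 2 *
                (fun i => (n b a i : ℂ)) ⬝ᵥ (crossProduct fun i => (starRingEnd ℂ) (v b i)) (v a)) := by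
          refine Finset.sum_congr rfl fun a _ => ?_
          rw [map_sum]
          exact Finset.sum_congr rfl fun b _ => hterm a b
      _ = _ := Finset.sum_comm
  have hSim : S.im = 0 := Complex.conj_eq_iff_im.mp hSreal
  -- Step 2 : T is the (real, nonneg) sum of the R's
  have hT : T = ((∑ a : Fin 5, ∑ b : Fin 5, R a b : ℝ) : ℂ) := by
    rw [hTdef, Complex.ofReal_sum]
    refine Finset.sum_congr rfl fun a _ => ?_
    rw [Complex.ofReal_sum]
    refine Finset.sum_congr rfl fun b _ => ?_
    by_cases hab : a < b
    · simp only [hRdef, hab, if_true]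
      have hx : ((fun i => (starRingEnd ℂ) (v a i)) - fun i => (starRingEnd ℂ) (v b i))
          = fun i => (starRingEnd ℂ) ((v a - v b) i) := by
        funext i; simp
      rw [hx, termA (v a - v b) (n a b) (hnunit a b (ne_of_lt hab))]
      push_cast
      ring
    · simp only [hRdef, hab, if_false, Complex.ofReal_zero]
  -- Step 3 : each R a b vanishes
  have hRnonneg : ∀ a b : Fin 5, 0 ≤ R a b := by
    intro a b
    simp only [hRdef]
    split
    · rename_i hab
      have hj := hjpos a b (ne_of_lt hab)
      exact mul_nonneg (by linarith)
        (Finset.sum_nonneg fun i _ => Complex.normSq_nonneg _)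
    · exact le_rfl
  have hRsum : ∑ a : Fin 5, ∑ b : Fin 5, R a b = 0 := by
    rw [hT] at h0
    have him := congrArg Complex.im h0
    simp only [Complex.add_im, Complex.mul_im, Complex.I_re, Complex.I_im, Complex.ofReal_re,
      Complex.ofReal_im, Complex.zero_im, zero_mul, one_mul, mul_zero, add_zero, zero_add] at him
    linarith [hSim, him]
  have hR0 : ∀ a b : Fin 5, R a b = 0 := by
    intro a b
    have h2 := (Finset.sum_eq_zero_iff_of_nonneg
      (fun a _ => Finset.sum_nonneg fun b _ => hRnonneg a b)).mp hRsum a (Finset.mem_univ a)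
    exact (Finset.sum_eq_zero_iff_of_nonneg (fun b _ => hRnonneg a b)).mp h2 b (Finset.mem_univ b)
  -- Step 4 : collinearity of the differences with the normals
  have hcol : ∀ a b : Fin 5, a < b → ∀ i, v a i - v b i
      = ((v a - v b) ⬝ᵥ (fun i => (n a b i : ℂ))) * n a b i := by
    intro a b hab i
    have hR := hR0 a b
    simp only [hRdef, hab, if_true] at hR
    have hj := hjpos a b (ne_of_lt hab)
    have hs : ∑ i, Complex.normSq ((v a - v b) i -
        ((v a - v b) ⬝ᵥ (fun i => (n a b i : ℂ))) * n a b i) = 0 := by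
      rcases mul_eq_zero.mp hR with h | h
      · exact absurd h (by positivity)
      · exact h
    have h1 := (Finset.sum_eq_zero_iff_of_nonneg
      (fun i _ => Complex.normSq_nonneg _)).mp hs i (Finset.mem_univ i)
    have h2 := Complex.normSq_eq_zero.mp h1
    have h3 : (v a - v b) i = v a i - v b i := rfl
    rw [h3] at h2
    linear_combination h2
  have hpair : ∀ a b : Fin 5, a ≠ b → ∃ cc : ℂ, ∀ i, v a i - v b i = cc * n a b i := by
    intro a b hab
    rcases lt_or_gt_of_ne hab with h | h
    · exact ⟨_, fun i => hcol a b h i⟩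
    · refine ⟨(v b - v a) ⬝ᵥ (fun i => (n b a i : ℂ)), fun i => ?_⟩
      have hba := hcol b a h i
      have hn : n b a i = -(n a b i) := by rw [hnanti a b]; rfl
      rw [hn] at hba
      push_cast at hba ⊢
      linear_combination -hba
  -- Step 5 : conclude via linear independence
  funext a
  rcases eq_or_ne a 4 with h4 | h4
  · rw [h4, hv4]; rfl
  · set b : Fin 5 := if a = 0 then 1 else 0 with hbdef
    have hb4 : b ≠ 4 := by rw [hbdef]; split <;> decide
    have hab : a ≠ b := by
      rw [hbdef]; split
      · rename_i h; rw [h]; decide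
      · rename_i h; exact h
    obtain ⟨ca, hca⟩ := hpair a 4 h4
    obtain ⟨cb, hcb⟩ := hpair b 4 hb4
    obtain ⟨cab, hcab⟩ := hpair a b hab
    have hva : ∀ i, v a i = ca * n a 4 i := by
      intro i
      have h1 := hca i
      rw [congrFun hv4 i] at h1
      simpa using h1
    have hvb : ∀ i, v b i = cb * n b 4 i := by
      intro i
      have h1 := hcb i
      rw [congrFun hv4 i] at h1
      simpa using h1
    have hrel : ∀ i, ca * (n a 4 i : ℂ) - cab * n a b i - cb * n b 4 i = 0 := by
      intro i
      have h1 := hcab i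
      rw [hva i, hvb i] at h1
      linear_combination h1
    have hli := Fintype.linearIndependent_iff.mp (hindep a b hab h4 hb4)
    have hre := hli ![ca.re, -cab.re, -cb.re] (by
      funext k
      have h1 := congrArg Complex.re (hrel k)
      simp only [Complex.sub_re, Complex.mul_re, Complex.ofReal_re, Complex.ofReal_im,
        Complex.zero_re, mul_zero, sub_zero] at h1
      simp only [Fin.sum_univ_three, Matrix.cons_val_zero, Matrix.cons_val_one,
        Matrix.head_cons, Pi.smul_apply, smul_eq_mul, Pi.add_apply, Pi.zero_apply,
        Matrix.cons_val_two, Matrix.tail_cons, Finset.sum_apply]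
      linarith) 0
    have him2 := hli ![ca.im, -cab.im, -cb.im] (by
      funext k
      have h1 := congrArg Complex.im (hrel k)
      simp only [Complex.sub_im, Complex.mul_im, Complex.ofReal_re, Complex.ofReal_im,
        Complex.zero_im, zero_mul, add_zero] at h1
      simp only [Fin.sum_univ_three, Matrix.cons_val_zero, Matrix.cons_val_one,
        Matrix.head_cons, Pi.smul_apply, smul_eq_mul, Pi.add_apply, Pi.zero_apply,
        Matrix.cons_val_two, Matrix.tail_cons, Finset.sum_apply]
      linarith) 0
    simp only [Matrix.cons_val_zero] at hre him2
    have hca0 : ca = 0 := Complex.ext hre him2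
    funext i
    rw [hva i, hca0, zero_mul]
    rfl
end

section
/- Let j assign to each unordered pair {a,b} of distinct elements of {1,…,5} a real number j_{ab} > 0, and let n assign to each ordered pair (a,b) of distinct elements a unit vector n_{ab} ∈ ℝ³ with n_{ba} = −n_{ab}. On the complex vector space of maps v : {1,…,5} → ℂ³ with v(5) = 0, define the symmetric complex-bilinear form H(v,v') = Σ_{a≠b} (j_{ab}/2) n_{ab}·(v(a) × v'(b)) + i Σ_{a<b} (j_{ab}/2)[(v(a)−v(b))·(v'(a)−v'(b)) − ((v(a)−v(b))·n_{ab})((v'(a)−v'(b))·n_{ab})]. If there exists a nonzero v with H(v',v) = 0 for all v', then there exist distinct a, b ∈ {1,…,4} such that the three vectors n_{a5}, n_{ab}, n_{b5} are linearly dependent over ℝ. -/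
open Matrix


lemma pair_alg (w : Fin 3 → ℂ) (N : Fin 3 → ℝ)
    (hN : N ⬝ᵥ N = 1) :
    ((fun i => (starRingEnd ℂ) (w i)) ⬝ᵥ w
      - ((fun i => (starRingEnd ℂ) (w i)) ⬝ᵥ (fun i => (N i : ℂ)))
        * (w ⬝ᵥ (fun i => (N i : ℂ))))
    = ((Complex.normSq (w 0 - (w ⬝ᵥ fun i => (N i:ℂ)) * N 0)
       + Complex.normSq (w 1 - (w ⬝ᵥ fun i => (N i:ℂ)) * N 1)
       + Complex.normSq (w 2 - (w ⬝ᵥ fun i => (N i:ℂ)) * N 2) : ℝ) : ℂ) := by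
  simp only [dotProduct, Fin.sum_univ_three] at hN ⊢
  push_cast
  simp only [Complex.normSq_eq_conj_mul_self, map_sub, _root_.map_mul, map_add,
    Complex.conj_ofReal]
  have h : ((N 0 : ℂ) * N 0 + N 1 * N 1 + N 2 * N 2) = 1 := by
    exact_mod_cast congrArg (fun r : ℝ => (r : ℂ)) hN
  linear_combination (-(((starRingEnd ℂ) (w 0)) * N 0 + ((starRingEnd ℂ) (w 1)) * N 1 + ((starRingEnd ℂ) (w 2)) * N 2) * (w 0 * N 0 + w 1 * N 1 + w 2 * N 2)) * h


/-- If (one chiral block of) the hessian of the euclidean EPRL vertex action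
with `γ < 1` is degenerate (has a nonzero null vector), then some triple of
normals `n_{a5}, n_{ab}, n_{b5}` is linearly dependent. Indices `0,…,4` of
`Fin 5` play the role of `1,…,5`; the index `4` plays the role of `5`. -/
theorem euclidean_EPRL_hessian_degenerate_normals_dependent
    (j : Fin 5 → Fin 5 → ℝ) (n : Fin 5 → Fin 5 → Fin 3 → ℝ)
    (hjsymm : ∀ a b, j a b = j b a)
    (hjpos : ∀ a b, a ≠ b → 0 < j a b)
    (hnanti : ∀ a b, n b a = -(n a b))
    (hnunit : ∀ a b, a ≠ b → (n a b) ⬝ᵥ (n a b) = 1)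
    (H : (Fin 5 → Fin 3 → ℂ) → (Fin 5 → Fin 3 → ℂ) → ℂ)
    (hH : ∀ v v', H v v' =
      (∑ a : Fin 5, ∑ b : Fin 5, if a = b then 0 else
        ((j a b : ℂ) / 2) *
          ((fun i => (n a b i : ℂ)) ⬝ᵥ (crossProduct (v a) (v' b)))) +
      Complex.I * (∑ a : Fin 5, ∑ b : Fin 5, if a < b then
        ((j a b : ℂ) / 2) *
          (((v a - v b) ⬝ᵥ (v' a - v' b)) -
            ((v a - v b) ⬝ᵥ (fun i => (n a b i : ℂ))) *
              ((v' a - v' b) ⬝ᵥ (fun i => (n a b i : ℂ)))) else 0))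
    (hdeg : ∃ v : Fin 5 → Fin 3 → ℂ, v 4 = 0 ∧ v ≠ 0 ∧
      ∀ v' : Fin 5 → Fin 3 → ℂ, v' 4 = 0 → H v' v = 0) :
    ∃ a b : Fin 5, a ≠ b ∧ a ≠ 4 ∧ b ≠ 4 ∧
      ¬ LinearIndependent ℝ ![n a 4, n a b, n b 4] := by
  obtain ⟨v, hv4, hvne, hnull⟩ := hdeg
  set v' : Fin 5 → Fin 3 → ℂ := fun a i => (starRingEnd ℂ) (v a i) with hv'
  have hv'4 : v' 4 = 0 := by funext i; simp [hv', hv4]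
  have h0 := hnull v' hv'4
  rw [hH] at h0
  -- A: imaginary part of the cross-product double sum vanishes
  have key : ∀ a b : Fin 5,
      (starRingEnd ℂ) (if a = b then 0 else ((j a b : ℂ) / 2) *
          ((fun i => (n a b i : ℂ)) ⬝ᵥ (crossProduct (v' a) (v b))))
      = (if b = a then 0 else ((j b a : ℂ) / 2) *
          ((fun i => (n b a i : ℂ)) ⬝ᵥ (crossProduct (v' b) (v a)))) := by
    intro a b
    by_cases hab : a = b
    · simp [hab]
    · rw [if_neg hab, if_neg (fun h => hab h.symm)]
      simp only [hnanti a b, hjsymm b a, hv']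
      simp only [cross_apply, dotProduct, Fin.sum_univ_three, Pi.neg_apply, map_sub,
        _root_.map_mul, map_add, map_div₀, Complex.conj_ofReal, Complex.conj_conj,
        Matrix.cons_val_zero, Matrix.cons_val_one, Matrix.head_cons,
        Matrix.cons_val_two, Matrix.tail_cons, map_ofNat]
      push_cast
      ring
  have hA : (∑ a : Fin 5, ∑ b : Fin 5, if a = b then 0 else ((j a b : ℂ) / 2) *
          ((fun i => (n a b i : ℂ)) ⬝ᵥ (crossProduct (v' a) (v b)))).im = 0 := by
    apply Complex.conj_eq_iff_im.mp
    rw [map_sum]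
    simp_rw [map_sum, key]
    exact Finset.sum_comm
  -- B: real part of the second double sum vanishes
  have hconj : ∀ a b : Fin 5, v' a - v' b = fun i => (starRingEnd ℂ) ((v a - v b) i) := by
    intro a b; funext i; simp [hv', Pi.sub_apply, map_sub]
  have hUval : ∀ a b : Fin 5, a ≠ b →
      (((v' a - v' b) ⬝ᵥ (v a - v b)) -
        ((v' a - v' b) ⬝ᵥ (fun i => (n a b i : ℂ))) *
          ((v a - v b) ⬝ᵥ (fun i => (n a b i : ℂ))))
      = ((Complex.normSq ((v a - v b) 0 - ((v a - v b) ⬝ᵥ fun i => (n a b i:ℂ)) * n a b 0)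
         + Complex.normSq ((v a - v b) 1 - ((v a - v b) ⬝ᵥ fun i => (n a b i:ℂ)) * n a b 1)
         + Complex.normSq ((v a - v b) 2 - ((v a - v b) ⬝ᵥ fun i => (n a b i:ℂ)) * n a b 2) : ℝ) : ℂ) := by
    intro a b hab
    rw [hconj a b]
    exact pair_alg _ _ (hnunit a b hab)
  have hnonneg : ∀ a b : Fin 5,
      0 ≤ (if a < b then ((j a b : ℂ) / 2) *
          (((v' a - v' b) ⬝ᵥ (v a - v b)) -
            ((v' a - v' b) ⬝ᵥ (fun i => (n a b i : ℂ))) *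
              ((v a - v b) ⬝ᵥ (fun i => (n a b i : ℂ)))) else 0).re := by
    intro a b
    split
    · next h =>
      rw [hUval a b h.ne]
      rw [show ((j a b : ℂ) / 2) * ((Complex.normSq ((v a - v b) 0 - ((v a - v b) ⬝ᵥ fun i => (n a b i:ℂ)) * n a b 0)
         + Complex.normSq ((v a - v b) 1 - ((v a - v b) ⬝ᵥ fun i => (n a b i:ℂ)) * n a b 1)
         + Complex.normSq ((v a - v b) 2 - ((v a - v b) ⬝ᵥ fun i => (n a b i:ℂ)) * n a b 2) : ℝ) : ℂ)
        = ((j a b / 2 * (Complex.normSq ((v a - v b) 0 - ((v a - v b) ⬝ᵥ fun i => (n a b i:ℂ)) * n a b 0)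
         + Complex.normSq ((v a - v b) 1 - ((v a - v b) ⬝ᵥ fun i => (n a b i:ℂ)) * n a b 1)
         + Complex.normSq ((v a - v b) 2 - ((v a - v b) ⬝ᵥ fun i => (n a b i:ℂ)) * n a b 2)) : ℝ) : ℂ) by push_cast; ring]
      rw [Complex.ofReal_re]
      have h1 := hjpos a b h.ne
      have h2 := Complex.normSq_nonneg ((v a - v b) 0 - ((v a - v b) ⬝ᵥ fun i => (n a b i:ℂ)) * n a b 0)
      have h3 := Complex.normSq_nonneg ((v a - v b) 1 - ((v a - v b) ⬝ᵥ fun i => (n a b i:ℂ)) * n a b 1)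
      have h4 := Complex.normSq_nonneg ((v a - v b) 2 - ((v a - v b) ⬝ᵥ fun i => (n a b i:ℂ)) * n a b 2)
      nlinarith
    · simp
  -- from h0 and hA: the real part of the second sum is 0
  have him := congrArg Complex.im h0
  rw [Complex.add_im, Complex.mul_im, Complex.I_re, Complex.I_im, hA] at him
  simp only [Complex.zero_im, zero_mul, one_mul, zero_add] at him
  -- him : (∑ a, ∑ b, U a b).re = 0
  rw [Complex.re_sum] at him
  simp_rw [Complex.re_sum] at him
  have hz : ∀ a b : Fin 5,
      (if a < b then ((j a b : ℂ) / 2) *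
          (((v' a - v' b) ⬝ᵥ (v a - v b)) -
            ((v' a - v' b) ⬝ᵥ (fun i => (n a b i : ℂ))) *
              ((v a - v b) ⬝ᵥ (fun i => (n a b i : ℂ)))) else 0).re = 0 := by
    intro a b
    have h1 := (Finset.sum_eq_zero_iff_of_nonneg
      (fun a _ => Finset.sum_nonneg (fun b _ => hnonneg a b))).mp him a (Finset.mem_univ a)
    exact (Finset.sum_eq_zero_iff_of_nonneg
      (fun b _ => hnonneg a b)).mp h1 b (Finset.mem_univ b)
  -- parallel condition for each a < b
  have hpar : ∀ a b : Fin 5, a < b → ∀ i : Fin 3,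
      (v a - v b) i = ((v a - v b) ⬝ᵥ fun i => (n a b i : ℂ)) * n a b i := by
    intro a b hab i
    have h := hz a b
    rw [if_pos hab, hUval a b hab.ne] at h
    rw [show ((j a b : ℂ) / 2) * ((Complex.normSq ((v a - v b) 0 - ((v a - v b) ⬝ᵥ fun i => (n a b i:ℂ)) * n a b 0)
         + Complex.normSq ((v a - v b) 1 - ((v a - v b) ⬝ᵥ fun i => (n a b i:ℂ)) * n a b 1)
         + Complex.normSq ((v a - v b) 2 - ((v a - v b) ⬝ᵥ fun i => (n a b i:ℂ)) * n a b 2) : ℝ) : ℂ)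
        = ((j a b / 2 * (Complex.normSq ((v a - v b) 0 - ((v a - v b) ⬝ᵥ fun i => (n a b i:ℂ)) * n a b 0)
         + Complex.normSq ((v a - v b) 1 - ((v a - v b) ⬝ᵥ fun i => (n a b i:ℂ)) * n a b 1)
         + Complex.normSq ((v a - v b) 2 - ((v a - v b) ⬝ᵥ fun i => (n a b i:ℂ)) * n a b 2)) : ℝ) : ℂ) by push_cast; ring,
      Complex.ofReal_re] at h
    have h1 := hjpos a b hab.ne
    have h2 := Complex.normSq_nonneg ((v a - v b) 0 - ((v a - v b) ⬝ᵥ fun i => (n a b i:ℂ)) * n a b 0)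
    have h3 := Complex.normSq_nonneg ((v a - v b) 1 - ((v a - v b) ⬝ᵥ fun i => (n a b i:ℂ)) * n a b 1)
    have h4 := Complex.normSq_nonneg ((v a - v b) 2 - ((v a - v b) ⬝ᵥ fun i => (n a b i:ℂ)) * n a b 2)
    have e0 : Complex.normSq ((v a - v b) 0 - ((v a - v b) ⬝ᵥ fun i => (n a b i:ℂ)) * n a b 0) = 0 := by nlinarith
    have e1 : Complex.normSq ((v a - v b) 1 - ((v a - v b) ⬝ᵥ fun i => (n a b i:ℂ)) * n a b 1) = 0 := by nlinarith
    have e2 : Complex.normSq ((v a - v b) 2 - ((v a - v b) ⬝ᵥ fun i => (n a b i:ℂ)) * n a b 2) = 0 := by nlinarith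
    fin_cases i
    · simpa [sub_eq_zero] using Complex.normSq_eq_zero.mp e0
    · simpa [sub_eq_zero] using Complex.normSq_eq_zero.mp e1
    · simpa [sub_eq_zero] using Complex.normSq_eq_zero.mp e2
  -- pick a with v a ≠ 0
  have hex : ∃ a, v a ≠ 0 := by
    by_contra h; push_neg at h; exact hvne (funext h)
  obtain ⟨a, hva⟩ := hex
  have ha4 : a ≠ 4 := by rintro rfl; exact hva hv4
  have hbex : ∃ b : Fin 5, a ≠ b ∧ b ≠ 4 ∧ b < 4 ∧ a < 4 := by
    fin_cases a
    · exact ⟨1, by decide, by decide, by decide, by decide⟩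
    · exact ⟨0, by decide, by decide, by decide, by decide⟩
    · exact ⟨0, by decide, by decide, by decide, by decide⟩
    · exact ⟨0, by decide, by decide, by decide, by decide⟩
    · exact absurd rfl ha4
  obtain ⟨b, hab, hb4, hb', ha'⟩ := hbex
  have hca : ∀ i, v a i = (v a ⬝ᵥ fun i => (n a 4 i : ℂ)) * n a 4 i := by
    intro i; have h := hpar a 4 ha' i; simpa [hv4, Pi.sub_apply] using h
  have hcb : ∀ i, v b i = (v b ⬝ᵥ fun i => (n b 4 i : ℂ)) * n b 4 i := by
    intro i; have h := hpar b 4 hb' i; simpa [hv4, Pi.sub_apply] using h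
  have hcane : (v a ⬝ᵥ fun i => (n a 4 i : ℂ)) ≠ 0 := by
    intro h
    apply hva
    funext i
    rw [hca i, h, zero_mul]; rfl
  have hpab : ∃ e : ℂ, ∀ i, v a i - v b i = e * n a b i := by
    rcases lt_or_gt_of_ne hab with h | h
    · exact ⟨_, fun i => by simpa [Pi.sub_apply] using hpar a b h i⟩
    · refine ⟨(v b - v a) ⬝ᵥ fun i => (n b a i : ℂ), fun i => ?_⟩
      have h2 := hpar b a h i
      rw [Pi.sub_apply] at h2
      have h3 : ((n b a i : ℝ) : ℂ) = -((n a b i : ℝ) : ℂ) := by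
        rw [hnanti a b]; simp
      linear_combination -h2 - ((v b - v a) ⬝ᵥ fun i => (n b a i : ℂ)) * h3
  obtain ⟨e, he⟩ := hpab
  refine ⟨a, b, hab, ha4, hb4, ?_⟩
  intro hli
  rw [Fintype.linearIndependent_iff] at hli
  have hrel : ∀ i : Fin 3,
      (v a ⬝ᵥ fun i => (n a 4 i : ℂ)) * (n a 4 i : ℂ) - e * (n a b i : ℂ)
        - (v b ⬝ᵥ fun i => (n b 4 i : ℂ)) * (n b 4 i : ℂ) = 0 := by
    intro i
    linear_combination he i + hcb i - hca i
  have hsum1 : ∑ i : Fin 3, (![(v a ⬝ᵥ fun i => (n a 4 i : ℂ)).re, -e.re,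
      -(v b ⬝ᵥ fun i => (n b 4 i : ℂ)).re]) i • (![n a 4, n a b, n b 4]) i = 0 := by
    rw [Fin.sum_univ_three]
    simp only [Matrix.cons_val_zero, Matrix.cons_val_one, Matrix.head_cons,
      Matrix.cons_val_two, Matrix.tail_cons]
    funext k
    have h := congrArg Complex.re (hrel k)
    simp only [Complex.sub_re, Complex.mul_re, Complex.ofReal_re, Complex.ofReal_im,
      mul_zero, sub_zero, Complex.zero_re] at h
    simp only [Pi.add_apply, Pi.smul_apply, smul_eq_mul, Pi.zero_apply]
    linarith
  have hsum2 : ∑ i : Fin 3, (![(v a ⬝ᵥ fun i => (n a 4 i : ℂ)).im, -e.im,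
      -(v b ⬝ᵥ fun i => (n b 4 i : ℂ)).im]) i • (![n a 4, n a b, n b 4]) i = 0 := by
    rw [Fin.sum_univ_three]
    simp only [Matrix.cons_val_zero, Matrix.cons_val_one, Matrix.head_cons,
      Matrix.cons_val_two, Matrix.tail_cons]
    funext k
    have h := congrArg Complex.im (hrel k)
    simp only [Complex.sub_im, Complex.mul_im, Complex.ofReal_re, Complex.ofReal_im,
      mul_zero, zero_add, add_zero, Complex.zero_im] at h
    simp only [Pi.add_apply, Pi.smul_apply, smul_eq_mul, Pi.zero_apply]
    linarith
  have h1 := hli _ hsum1 0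
  have h2 := hli _ hsum2 0
  simp only [Matrix.cons_val_zero] at h1 h2
  exact hcane (Complex.ext h1 h2)
end

section
/- Let R and I be symmetric real n×n matrices, regarded as symmetric complex-bilinear forms on ℂⁿ, and set H = R + iI. Assume I is positive semidefinite, i.e. wᵀIw ≥ 0 for all w ∈ ℝⁿ. Then for any v ∈ ℂⁿ, writing v = v_r + i·v_a with v_r, v_a ∈ ℝⁿ, the following are equivalent: (1) Hv = 0 (equivalently H(w,v) = 0 for all w ∈ ℂⁿ); (2) R v_r = R v_a = I v_r = I v_a = 0. -/
open Matrix

variable {ι : Type*}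

theorem Matrix.IsSymm.posSemidef_of_dotProduct_mulVec_nonneg [Fintype ι] {A : Matrix ι ι ℝ}
    (hA : A.IsSymm) (h : ∀ w : ι → ℝ, 0 ≤ w ⬝ᵥ (A *ᵥ w)) : A.PosSemidef :=
  posSemidef_iff_dotProduct_mulVec.mpr ⟨hA, fun w => by simpa using h w⟩

/-- `A x = B y` and `A y = -B x` say that `(A + iB)(x + iy) = 0`. Symmetry of `A` gives
`yᵀ B y = xᵀ A y = -xᵀ B x`, so both nonnegative forms vanish. -/
theorem Matrix.PosSemidef.mulVec_eq_zero_of_mulVec_eq_of_mulVec_eq_neg [Fintype ι]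
    {A B : Matrix ι ι ℝ} (hB : B.PosSemidef) (hA : A.IsSymm) {x y : ι → ℝ}
    (hx : A *ᵥ x = B *ᵥ y) (hy : A *ᵥ y = -(B *ᵥ x)) :
    B *ᵥ x = 0 ∧ B *ᵥ y = 0 := by
  have hform : y ⬝ᵥ (B *ᵥ y) = -(x ⬝ᵥ (B *ᵥ x)) := calc
    y ⬝ᵥ (B *ᵥ y) = x ⬝ᵥ (A *ᵥ y) := by
      rw [← hx, dotProduct_comm, dotProduct_mulVec, ← mulVec_transpose, hA]
    _ = -(x ⬝ᵥ (B *ᵥ x)) := by rw [hy, dotProduct_neg]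
  have hx₀ : 0 ≤ x ⬝ᵥ (B *ᵥ x) := by simpa using hB.dotProduct_mulVec_nonneg x
  have hy₀ : 0 ≤ y ⬝ᵥ (B *ᵥ y) := by simpa using hB.dotProduct_mulVec_nonneg y
  exact ⟨(hB.dotProduct_mulVec_zero_iff x).mp (by simpa using by linarith),
    (hB.dotProduct_mulVec_zero_iff y).mp (by simpa using by linarith)⟩

theorem ofReal_add_I_smul_ofReal_eq_zero_iff {x y : ι → ℝ} :
    (fun k => (x k : ℂ)) + Complex.I • (fun k => (y k : ℂ)) = 0 ↔ x = 0 ∧ y = 0 := by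
  simp [funext_iff, Complex.ext_iff, forall_and]

theorem complexify_mulVec_complexify [Fintype ι] (A B : Matrix ι ι ℝ) (x y : ι → ℝ) :
    (A.map (fun t => (t : ℂ)) + Complex.I • B.map (fun t => (t : ℂ))) *ᵥ
        ((fun k => (x k : ℂ)) + Complex.I • (fun k => (y k : ℂ))) =
      (fun k => ((A *ᵥ x - B *ᵥ y) k : ℂ)) +
        Complex.I • (fun k => ((A *ᵥ y + B *ᵥ x) k : ℂ)) := by
  have hmap (M : Matrix ι ι ℝ) (z : ι → ℝ) :
      M.map (fun t => (t : ℂ)) *ᵥ (fun k => (z k : ℂ)) = fun k => ((M *ᵥ z) k : ℂ) :=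
    funext fun k => (Complex.ofRealHom.map_mulVec M z k).symm
  ext k
  simp only [add_mulVec, mulVec_add, mulVec_smul, smul_mulVec, hmap, Pi.add_apply,
    Pi.sub_apply, Pi.smul_apply, smul_eq_mul, Complex.ofReal_add, Complex.ofReal_sub]
  linear_combination (B *ᵥ y) k * Complex.I_sq

/-- For `H = R + iI` with `R, I` real symmetric and `I` positive semidefinite,
a complex vector `v = v_r + i v_a` is annihilated by `H` iff its real and
imaginary parts are annihilated by both `R` and `I`. -/
theorem annihilation_of_H_iff_real_imaginary_parts
    {n : ℕ} (R I : Matrix (Fin n) (Fin n) ℝ)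
    (hRsymm : R.IsSymm) (hIsymm : I.IsSymm)
    (hIpsd : ∀ w : Fin n → ℝ, 0 ≤ w ⬝ᵥ (I *ᵥ w))
    (H : Matrix (Fin n) (Fin n) ℂ)
    (hH : H = R.map (fun x => (x : ℂ)) + Complex.I • I.map (fun x => (x : ℂ)))
    (vr va : Fin n → ℝ) (v : Fin n → ℂ)
    (hv : v = fun k => (vr k : ℂ) + Complex.I * (va k : ℂ)) :
    H *ᵥ v = 0 ↔ (R *ᵥ vr = 0 ∧ R *ᵥ va = 0 ∧ I *ᵥ vr = 0 ∧ I *ᵥ va = 0) := by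
  have hv' : v = (fun k => (vr k : ℂ)) + Complex.I • (fun k => (va k : ℂ)) := hv
  rw [hH, hv', complexify_mulVec_complexify, ofReal_add_I_smul_ofReal_eq_zero_iff,
    sub_eq_zero, add_eq_zero_iff_eq_neg]
  constructor
  · rintro ⟨hr, ha⟩
    obtain ⟨hIr, hIa⟩ := (hIsymm.posSemidef_of_dotProduct_mulVec_nonneg hIpsd)
      |>.mulVec_eq_zero_of_mulVec_eq_of_mulVec_eq_neg hRsymm hr ha
    exact ⟨hr.trans hIa, ha.trans (by rw [hIr, neg_zero]), hIr, hIa⟩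
  · rintro ⟨hRr, hRa, hIr, hIa⟩
    exact ⟨hRr.trans hIa.symm, by rw [hRa, hIr, neg_zero]⟩
end

section
/- Let E be a finite-dimensional complex vector space equipped with a conjugation σ : E → E (an ℝ-linear involution with σ(c·x) = c̄·σ(x) for c ∈ ℂ) and an alternating complex-bilinear form Ω on E satisfying Ω(σ(x), σ(y)) = conj(Ω(x, y)) for all x, y. Let L ⊆ E be a complex subspace that is lagrangean for Ω, i.e. Ω(w, w') = 0 for all w, w' ∈ L, and every v ∈ E with Ω(w, v) = 0 for all w ∈ L lies in L. Consider the sesquilinear form I on L given by I(v, v') = −(i/2)·Ω(σ(v), v'). Then I is nondegenerate on L (that is, the only v ∈ L with Ω(σ(w), v) = 0 for all w ∈ L is v = 0) if and only if L ∩ σ(L) = {0}. -/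
/-- A lagrangean subspace `L` of a complex symplectic vector space with a
compatible conjugation `σ` is strictly positive (the sesquilinear form
`I(v,v') = -(i/2) Ω(σ v, v')` is nondegenerate on `L`) iff `L ∩ σ(L) = {0}`,
i.e. the only vector of `L` whose conjugate also lies in `L` is zero. -/
theorem lagrangean_strictly_positive_iff
    {E : Type*} [AddCommGroup E] [Module ℂ E] [FiniteDimensional ℂ E]
    (σ : E → E)
    (hσadd : ∀ x y, σ (x + y) = σ x + σ y)
    (hσsmul : ∀ (c : ℂ) (x : E), σ (c • x) = (starRingEnd ℂ c) • σ x)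
    (hσinv : ∀ x, σ (σ x) = x)
    (Ω : E →ₗ[ℂ] E →ₗ[ℂ] ℂ)
    (halt : ∀ x, Ω x x = 0)
    (hconj : ∀ x y, Ω (σ x) (σ y) = starRingEnd ℂ (Ω x y))
    (L : Submodule ℂ E)
    (hiso : ∀ w ∈ L, ∀ w' ∈ L, Ω w w' = 0)
    (hmax : ∀ v : E, (∀ w ∈ L, Ω w v = 0) → v ∈ L) :
    (∀ v ∈ L, (∀ w ∈ L, Ω (σ w) v = 0) → v = 0) ↔
      (∀ x ∈ L, σ x ∈ L → x = 0) := by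
  constructor
  · intro hnd x hx hσx
    apply hnd x hx
    intro w hw
    have : Ω (σ w) (σ (σ x)) = starRingEnd ℂ (Ω w (σ x)) := hconj w (σ x)
    rw [hσinv] at this
    rw [this, hiso w hw (σ x) hσx]
    simp
  · intro h0 v hv hker
    apply h0 v hv
    apply hmax
    intro w hw
    have := hconj (σ w) v
    rw [hσinv] at this
    rw [this, hker w hw]
    simp
end

section
/- Let V be a real vector space, and for each pair (i,j) with 1 ≤ i < j ≤ 5 let B_{ij}, B'_{ij} ∈ V be given vectors. Suppose v : {1,…,5} → V satisfies v(5) = 0, v ≠ 0, and v(i) − v(j) ∈ span_ℝ{B_{ij}, B'_{ij}} for all 1 ≤ i < j ≤ 5. Then there exist distinct a, b ∈ {1,…,4} such that the six vectors B_{a5}, B'_{a5}, B_{ab}, B'_{ab}, B_{b5}, B'_{b5} are linearly dependent over ℝ. -/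
/-- If a nonzero `v : {1,…,5} → V` with `v(5) = 0` satisfies
`v(i) - v(j) ∈ span{B_{ij}, B'_{ij}}` for all `i < j`, then for some pair
`a < b` with `a, b ≠ 5` the six vectors
`B_{a5}, B'_{a5}, B_{ab}, B'_{ab}, B_{b5}, B'_{b5}` are linearly dependent.
Indices `0,…,4` of `Fin 5` play the role of `1,…,5`; the index `4` plays the
role of `5`. -/
theorem exists_dependent_sextuple_of_null_vector
    {V : Type*} [AddCommGroup V] [Module ℝ V]
    (B B' : Fin 5 → Fin 5 → V)
    (v : Fin 5 → V) (hv5 : v 4 = 0) (hv : v ≠ 0)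
    (hspan : ∀ i j : Fin 5, i < j →
      v i - v j ∈ Submodule.span ℝ {B i j, B' i j}) :
    ∃ a b : Fin 5, a < b ∧ a ≠ 4 ∧ b ≠ 4 ∧
      ¬ LinearIndependent ℝ ![B a 4, B' a 4, B a b, B' a b, B b 4, B' b 4] := by
  -- find c with v c ≠ 0
  obtain ⟨c, hc⟩ : ∃ c, v c ≠ 0 := by
    by_contra h
    push_neg at h
    exact hv (funext h)
  have hc4 : c ≠ 4 := by rintro rfl; exact hc hv5
  have hclt : c < 4 := by
    have := c.isLt
    rw [Fin.lt_iff_val_lt_val]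
    have : c.val ≠ 4 := fun h => hc4 (Fin.ext h)
    omega
  set d : Fin 5 := if c = 0 then 1 else 0 with hd
  have hdc : d ≠ c := by
    rcases eq_or_ne c 0 with h | h <;> simp [hd, h]
    exact fun hh => h hh.symm
  have hd4 : d ≠ 4 := by rcases eq_or_ne c 0 with h | h <;> simp [hd, h]
  have hdlt : d < 4 := by
    have := d.isLt
    rw [Fin.lt_iff_val_lt_val]
    have : d.val ≠ 4 := fun h => hd4 (Fin.ext h)
    omega
  clear_value d
  clear hd
  have h5 : (5 : Fin 6) = Fin.succ 4 := rfl
  -- span memberships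
  obtain ⟨α, β, h1⟩ := Submodule.mem_span_pair.mp
    ((by simpa [hv5] using hspan c 4 hclt) : v c ∈ Submodule.span ℝ {B c 4, B' c 4})
  obtain ⟨ε, ζ, h3⟩ := Submodule.mem_span_pair.mp
    ((by simpa [hv5] using hspan d 4 hdlt) : v d ∈ Submodule.span ℝ {B d 4, B' d 4})
  rcases lt_or_gt_of_ne (Ne.symm hdc) with hcd | hcd
  · -- c < d
    obtain ⟨γ, δ, h2⟩ := Submodule.mem_span_pair.mp (hspan c d hcd)
    refine ⟨c, d, hcd, hc4, hd4, fun hli => ?_⟩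
    have := Fintype.linearIndependent_iff.mp hli ![α, β, -γ, -δ, -ε, -ζ] ?_
    · apply hc
      have hα : α = 0 := by simpa using this 0
      have hβ : β = 0 := by simpa using this 1
      rw [← h1, hα, hβ]; simp
    · simp [Fin.sum_univ_six, h5, Matrix.cons_val_succ]
      have : (α • B c 4 + β • B' c 4) - (γ • B c d + δ • B' c d)
          - (ε • B d 4 + ζ • B' d 4) = 0 := by
        rw [h1, h2, h3]; abel
      linear_combination (norm := abel) this
  · -- d < c
    obtain ⟨γ, δ, h2⟩ := Submodule.mem_span_pair.mp (hspan d c hcd)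
    refine ⟨d, c, hcd, hd4, hc4, fun hli => ?_⟩
    have := Fintype.linearIndependent_iff.mp hli ![-ε, -ζ, γ, δ, α, β] ?_
    · apply hc
      have hα : α = 0 := by simpa using this 4
      have hβ : β = 0 := by simpa [h5, Matrix.cons_val_succ] using this 5
      rw [← h1, hα, hβ]; simp
    · simp [Fin.sum_univ_six, h5, Matrix.cons_val_succ]
      have : (α • B c 4 + β • B' c 4) + (γ • B d c + δ • B' d c)
          - (ε • B d 4 + ζ • B' d 4) = 0 := by
        rw [h1, h2, h3]; abel
      linear_combination (norm := abel) this
end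

section
/- Let V be a real vector space, and for each pair (i,j) with 1 ≤ i < j ≤ 5 let I_{ij} be a positive semidefinite symmetric bilinear form on V whose radical {w ∈ V : I_{ij}(w, u) = 0 for all u ∈ V} equals span_ℝ{B_{ij}, B'_{ij}} for given vectors B_{ij}, B'_{ij} ∈ V. Assume that for every pair of distinct a, b ∈ {1,…,4} the six vectors B_{a5}, B'_{a5}, B_{ab}, B'_{ab}, B_{b5}, B'_{b5} are linearly independent over ℝ. Then the quadratic form Q(v) = Σ_{1≤i<j≤5} I_{ij}(v(i) − v(j), v(i) − v(j)) on the space of maps v : {1,…,5} → V with v(5) = 0 is positive definite: Q(v) = 0 implies v = 0. -/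
private lemma psd_zero {V : Type*} [AddCommGroup V] [Module ℝ V]
    (J : V →ₗ[ℝ] V →ₗ[ℝ] ℝ) (hs : ∀ x y, J x y = J y x) (hp : ∀ x, 0 ≤ J x x)
    (w : V) (hw : J w w = 0) : ∀ u, J w u = 0 := by
  intro u
  have key : ∀ t : ℝ, 0 ≤ t ^ 2 * J u u + 2 * t * J w u := by
    intro t
    have h := hp (w + t • u)
    have hexp : J (w + t • u) (w + t • u)
        = J w w + t * J w u + t * J u w + t * (t * J u u) := by
      simp [map_add, map_smul, smul_eq_mul]
      ring
    rw [hexp, hw, hs u w] at h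
    nlinarith
  by_cases hA : J u u = 0
  · have h1 := key 1
    have h2 := key (-1)
    rw [hA] at h1 h2
    nlinarith
  · have hA' : 0 < J u u := lt_of_le_of_ne (hp u) (Ne.symm hA)
    have hk := key (-(J w u) / J u u)
    have he : (-(J w u) / J u u) ^ 2 * J u u + 2 * (-(J w u) / J u u) * J w u
        = -((J w u) ^ 2 / J u u) := by
      field_simp
      ring
    rw [he] at hk
    have h6 : (J w u) ^ 2 / J u u = 0 :=
      le_antisymm (by linarith) (div_nonneg (sq_nonneg _) hA'.le)
    have h7 : (J w u) ^ 2 = 0 := by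
      rcases div_eq_zero_iff.mp h6 with h | h
      · exact h
      · exact absurd h hA
    exact pow_eq_zero_iff (two_ne_zero) |>.mp h7

private lemma pair_zero {V : Type*} [AddCommGroup V] [Module ℝ V]
    {x1 x2 x3 x4 x5 x6 : V}
    (h : LinearIndependent ℝ ![x1, x2, x3, x4, x5, x6]) {p q : V}
    (hp : p ∈ Submodule.span ℝ {x1, x2}) (hq : q ∈ Submodule.span ℝ {x5, x6})
    (hpq : p - q ∈ Submodule.span ℝ {x3, x4}) : p = 0 ∧ q = 0 := by
  obtain ⟨a, b, hab⟩ := Submodule.mem_span_pair.mp hp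
  obtain ⟨c, d, hcd⟩ := Submodule.mem_span_pair.mp hq
  obtain ⟨e, f, hef⟩ := Submodule.mem_span_pair.mp hpq
  have hz := Fintype.linearIndependent_iff.mp h ![a, b, -e, -f, -c, -d] ?_
  · have ha0 : a = 0 := hz 0
    have hb0 : b = 0 := hz 1
    have hc0 : -c = 0 := hz 4
    have hd0 : -d = 0 := hz 5
    constructor
    · rw [← hab, ha0, hb0]; simp
    · rw [← hcd, show c = 0 by linarith, show d = 0 by linarith]; simp
  · have : a • x1 + b • x2 - (e • x3 + f • x4) - (c • x5 + d • x6) = 0 := by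
      rw [hab, hef, hcd]; abel
    rw [Fin.sum_univ_six]
    simp only [Matrix.cons_val_zero, Matrix.cons_val_one, Matrix.head_cons,
      Matrix.cons_val_two, Matrix.tail_cons, Matrix.cons_val_three,
      Matrix.cons_val_four, Matrix.cons_val_fin_one, neg_smul,
      show ((5 : Fin 6)) = Fin.succ 4 from rfl, Matrix.cons_val_succ]
    rw [← this]; abel

/-- Positive definiteness of the imaginary part of the reduced hessian of the
lorentzian EPRL model: if each block `I_{ij}` is a positive semidefinite
symmetric bilinear form whose radical is `span{B_{ij}, B'_{ij}}`, and the six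
vectors `B_{a5}, B'_{a5}, B_{ab}, B'_{ab}, B_{b5}, B'_{b5}` are linearly
independent for every pair `a < b` with `a, b ≠ 5`, then
`Q(v) = Σ_{i<j} I_{ij}(v(i)-v(j), v(i)-v(j))` vanishes only at `v = 0` on the
space of maps with `v(5) = 0`. Indices `0,…,4` of `Fin 5` play the role of
`1,…,5`; the index `4` plays the role of `5`. -/
theorem reduced_hessian_quadratic_form_positive_definite
    {V : Type*} [AddCommGroup V] [Module ℝ V]
    (I : Fin 5 → Fin 5 → V →ₗ[ℝ] V →ₗ[ℝ] ℝ)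
    (B B' : Fin 5 → Fin 5 → V)
    (hsymm : ∀ i j : Fin 5, i < j → ∀ x y, I i j x y = I i j y x)
    (hpsd : ∀ i j : Fin 5, i < j → ∀ x, 0 ≤ I i j x x)
    (hrad : ∀ i j : Fin 5, i < j → ∀ w : V,
      (∀ u : V, I i j w u = 0) ↔ w ∈ Submodule.span ℝ {B i j, B' i j})
    (hindep : ∀ a b : Fin 5, a < b → a ≠ 4 → b ≠ 4 →
      LinearIndependent ℝ ![B a 4, B' a 4, B a b, B' a b, B b 4, B' b 4]) :
    ∀ v : Fin 5 → V, v 4 = 0 →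
      (∑ i : Fin 5, ∑ j : Fin 5,
        if i < j then I i j (v i - v j) (v i - v j) else 0) = 0 →
      v = 0 := by
  intro v hv4 hQ
  have hnn : ∀ i j : Fin 5, (0:ℝ) ≤ if i < j then I i j (v i - v j) (v i - v j) else 0 := by
    intro i j
    split
    · exact hpsd i j ‹_› _
    · exact le_refl 0
  have h1 := (Finset.sum_eq_zero_iff_of_nonneg (fun i _ =>
    Finset.sum_nonneg (fun j _ => hnn i j))).mp hQ
  have hterm : ∀ i j : Fin 5, i < j → I i j (v i - v j) (v i - v j) = 0 := by
    intro i j hij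
    have h2 := (Finset.sum_eq_zero_iff_of_nonneg (fun j _ => hnn i j)).mp
      (h1 i (Finset.mem_univ i)) j (Finset.mem_univ j)
    simpa [hij] using h2
  have hmem : ∀ i j : Fin 5, i < j →
      v i - v j ∈ Submodule.span ℝ {B i j, B' i j} := by
    intro i j hij
    exact (hrad i j hij _).mp
      (psd_zero (I i j) (hsymm i j hij) (hpsd i j hij) _ (hterm i j hij))
  have hvi : ∀ i : Fin 5, i < 4 → v i ∈ Submodule.span ℝ {B i 4, B' i 4} := by
    intro i hi
    have := hmem i 4 hi
    rwa [hv4, sub_zero] at this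
  have key : ∀ a b : Fin 5, a < b → b < 4 → v a = 0 ∧ v b = 0 := by
    intro a b hab hb4
    exact pair_zero (hindep a b hab (Fin.ne_of_lt (hab.trans hb4))
      (Fin.ne_of_lt hb4)) (hvi a (hab.trans hb4)) (hvi b hb4) (hmem a b hab)
  have h01 := key 0 1 (by decide) (by decide)
  have h23 := key 2 3 (by decide) (by decide)
  funext i
  fin_cases i
  · simpa using h01.1
  · simpa using h01.2
  · simpa using h23.1
  · simpa using h23.2
  · simpa using hv4
end
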